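/- In ℂ(x)[∂], the operators A1 = ∂⁴ − (8/x²)∂² + (24/x³)∂ − 24/x⁴ and A2 = ∂⁵ − (10/x²)∂³ + (40/x³)∂² − (80/x⁴)∂ + 80/x⁵ commute with each other. -/

import Mathlib

/-!
`ratD` is defined through the reduced representation `num / denom`, but the quotient rule holds
for every representation `p / q` (two representations satisfy `p' q = p q'`, and one
differentiates that relation). Additivity and the Leibniz rule follow by putting both sides over
a common denominator, so `ratD` is a `ℂ`-derivation with `ratD x = 1`. Expanding both composites
by the Leibniz rule then gives the same polynomial in `x⁻¹` and the derivatives of `f`.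
-/

open RatFunc

/-- The derivation `d/dx` on the differential field `ℂ(x)` of rational functions,
given by the quotient rule on the (coprime) numerator and denominator. -/
noncomputable def ratD (f : RatFunc ℂ) : RatFunc ℂ :=
  (algebraMap (Polynomial ℂ) (RatFunc ℂ) (Polynomial.derivative f.num)
      * algebraMap (Polynomial ℂ) (RatFunc ℂ) f.denom
    - algebraMap (Polynomial ℂ) (RatFunc ℂ) f.num
      * algebraMap (Polynomial ℂ) (RatFunc ℂ) (Polynomial.derivative f.denom))
    / algebraMap (Polynomial ℂ) (RatFunc ℂ) f.denom ^ 2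


/-- The operator `A₁ = ∂⁴ - (8/x²)∂² + (24/x³)∂ - 24/x⁴`. -/
noncomputable def opA1 (f : RatFunc ℂ) : RatFunc ℂ :=
  ratD^[4] f - 8 / X ^ 2 * ratD^[2] f + 24 / X ^ 3 * ratD f - 24 / X ^ 4 * f

/-- The operator `A₂ = ∂⁵ - (10/x²)∂³ + (40/x³)∂² - (80/x⁴)∂ + 80/x⁵`. -/
noncomputable def opA2 (f : RatFunc ℂ) : RatFunc ℂ :=
  ratD^[5] f - 10 / X ^ 2 * ratD^[3] f + 40 / X ^ 3 * ratD^[2] f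
    - 80 / X ^ 4 * ratD f + 80 / X ^ 5 * f

theorem Derivation.map_ofNat {R A M : Type*} [CommSemiring R] [CommSemiring A] [AddCommMonoid M]
    [Algebra R A] [Module A M] [Module R M] (D : Derivation R A M) (n : ℕ) [n.AtLeastTwo] :
    D (no_index (OfNat.ofNat n : A)) = 0 :=
  D.map_natCast n

section

open Polynomial

local notation "α" => algebraMap ℂ[X] (RatFunc ℂ)

theorem ratD_div_algebraMap (p q : ℂ[X]) (hq : q ≠ 0) :
    ratD (α p / α q) = (α (derivative p) * α q - α p * α (derivative q)) / α q ^ 2 := by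
  set f := α p / α q
  have hdenom : α f.denom ≠ 0 := algebraMap_ne_zero f.denom_ne_zero
  have hq' : α q ≠ 0 := algebraMap_ne_zero hq
  have cross : f.num * q = p * f.denom := by
    have h : α f.num / α f.denom = α p / α q := by rw [num_div_denom]
    rw [div_eq_div_iff hdenom hq'] at h
    exact algebraMap_injective ℂ (by simpa only [map_mul] using h)
  have cross_derivative := congrArg (α ∘ derivative) cross
  have cross_mapped := congrArg α cross
  simp only [Function.comp, derivative_mul, map_add, map_mul] at cross_derivative cross_mapped
  rw [ratD, div_eq_div_iff (pow_ne_zero 2 hdenom) (pow_ne_zero 2 hq')]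
  linear_combination
    (-α (derivative q) * α f.denom - α (derivative f.denom) * α q) * cross_mapped
      + α f.denom * α q * cross_derivative

theorem ratD_algebraMap (p : ℂ[X]) : ratD (α p) = α (derivative p) := by
  simpa using ratD_div_algebraMap p 1 one_ne_zero

theorem ratD_add (f g : RatFunc ℂ) : ratD (f + g) = ratD f + ratD g := by
  rw [← f.num_div_denom, ← g.num_div_denom]
  have hf := algebraMap_ne_zero f.denom_ne_zero
  have hg := algebraMap_ne_zero g.denom_ne_zero
  have hsum : α f.num / α f.denom + α g.num / α g.denom
      = α (f.num * g.denom + g.num * f.denom) / α (f.denom * g.denom) := by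
    rw [div_add_div _ _ hf hg]
    simp only [map_add, map_mul]
    ring
  rw [hsum, ratD_div_algebraMap _ _ (mul_ne_zero f.denom_ne_zero g.denom_ne_zero),
    ratD_div_algebraMap _ _ f.denom_ne_zero, ratD_div_algebraMap _ _ g.denom_ne_zero]
  simp only [map_mul, map_add, derivative_mul]
  field_simp
  ring

theorem ratD_mul (f g : RatFunc ℂ) : ratD (f * g) = f * ratD g + g * ratD f := by
  rw [← f.num_div_denom, ← g.num_div_denom]
  have hf := algebraMap_ne_zero f.denom_ne_zero
  have hg := algebraMap_ne_zero g.denom_ne_zero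
  rw [div_mul_div_comm, ← map_mul, ← map_mul,
    ratD_div_algebraMap _ _ (mul_ne_zero f.denom_ne_zero g.denom_ne_zero),
    ratD_div_algebraMap _ _ f.denom_ne_zero, ratD_div_algebraMap _ _ g.denom_ne_zero]
  simp only [map_mul, map_add, derivative_mul]
  field_simp
  ring

theorem ratD_smul (c : ℂ) (f : RatFunc ℂ) : ratD (c • f) = c • ratD f := by
  rw [Algebra.smul_def, Algebra.smul_def, ratD_mul, algebraMap_eq_C, ← algebraMap_C,
    ratD_algebraMap, derivative_C, map_zero, mul_zero, add_zero]

noncomputable def ratDerivation : Derivation ℂ (RatFunc ℂ) (RatFunc ℂ) :=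
  Derivation.mk' ⟨⟨ratD, ratD_add⟩, ratD_smul⟩ ratD_mul

theorem coe_ratDerivation : ⇑ratDerivation = ratD := rfl

theorem ratDerivation_X : ratDerivation RatFunc.X = 1 := by
  simpa [coe_ratDerivation] using ratD_algebraMap Polynomial.X

end

theorem ratDerivation_inv_X_pow (n : ℕ) :
    ratDerivation (X⁻¹ ^ n) = -(n : RatFunc ℂ) * X⁻¹ ^ (n + 1) := by
  rw [Derivation.leibniz_pow, Derivation.leibniz_inv, ratDerivation_X]
  cases n with
  | zero => simp
  | succ n =>
    simp only [smul_eq_mul, nsmul_eq_mul, add_tsub_cancel_right]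
    push_cast
    ring

/-- `A₁` and `A₂` commute in `ℂ(x)[∂]`. -/
theorem stmt6 : ∀ f : RatFunc ℂ, opA1 (opA2 f) = opA2 (opA1 f) := by
  intro f
  simp only [opA1, opA2, ← coe_ratDerivation, Function.iterate_succ_apply',
    Function.iterate_zero_apply, div_eq_mul_inv, ← inv_pow]
  simp only [map_add, map_sub, map_neg, map_zero, Derivation.leibniz, ratDerivation_inv_X_pow,
    Derivation.map_ofNat, Derivation.map_natCast, smul_eq_mul]
  push_cast
  ring
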